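/- Let d ≥ 1, let 0 < ε ≤ 1, let k ≥ 1, and let C be a finite set of points of Euclidean space ℝ^d. Suppose C is covered by k closed balls B₁, …, B_k, where Bᵢ has center cᵢ ∈ ℝ^d and radius rᵢ > 0. Then for each i ∈ {1, …, k} there exist a subset Sᵢ ⊆ C ∩ Bᵢ with |Sᵢ| ≤ ⌈2/ε⌉ + 1 and a point cᵢ' ∈ ℝ^d such that whenever Sᵢ is nonempty, (cᵢ', ρᵢ) is a minimum enclosing ball of Sᵢ for some ρᵢ — i.e., Sᵢ ⊆ closedBall(cᵢ', ρᵢ) and ρᵢ ≤ ρ' whenever Sᵢ ⊆ closedBall(c', ρ') — and moreover C is contained in the union over those i with Sᵢ nonempty of the closed balls of radius (1 + ε)·rᵢ around cᵢ'. -/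

import Mathlib

/-!
The Bădoiu–Clarkson argument. If `(c, ρ)` is the minimum enclosing ball of `S`, then every
point `x` has a point `s ∈ S` with `ρ² + ‖x - c‖² ≤ ‖x - s‖²`: otherwise moving the center
slightly towards `x` would shrink the ball. Applied to the center of the minimum enclosing ball
of `S ∪ {p}` with `p` outside the `K`-ball around `c`, this forces the new radius above
`(K² + ρ²) / (2K)`. Greedily adding an uncovered point of a cluster of radius `r < K` therefore
yields radii `ρₙ ≥ n K / (n + 2)`; for `K = (1 + ε) r` this exceeds `r` once `n ≥ 2 / ε`, which
is impossible, so after at most `⌈2 / ε⌉` additions the `K`-ball covers the cluster.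
-/

open Metric Filter Topology

section MetricSpace

variable {X : Type*} [PseudoMetricSpace X]

def IsMinEnclosingBall (S : Set X) (c : X) (ρ : ℝ) : Prop :=
  S ⊆ closedBall c ρ ∧ ∀ (c' : X) (ρ' : ℝ), S ⊆ closedBall c' ρ' → ρ ≤ ρ'

namespace IsMinEnclosingBall

variable {S : Set X} {c : X} {ρ : ℝ}

theorem nonempty (h : IsMinEnclosingBall S c ρ) : S.Nonempty := by
  by_contra hS
  have := h.2 c (ρ - 1) (by simp [Set.not_nonempty_iff_eq_empty.1 hS])
  linarith

theorem radius_nonneg (h : IsMinEnclosingBall S c ρ) : 0 ≤ ρ :=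
  let ⟨_, hs⟩ := h.nonempty
  dist_nonneg.trans (h.1 hs)

theorem exists_radius_le_dist {S : Finset X} (h : IsMinEnclosingBall (S : Set X) c ρ) (c' : X) :
    ∃ s ∈ S, ρ ≤ dist s c' := by
  have hS : S.Nonempty := Finset.coe_nonempty.1 h.nonempty
  obtain ⟨s, hs, hmax⟩ := S.exists_mem_eq_sup' hS (dist · c')
  refine ⟨s, hs, hmax ▸ h.2 c' _ fun t ht => ?_⟩
  exact mem_closedBall.2 (S.le_sup' (dist · c') ht)

end IsMinEnclosingBall

theorem exists_isMinEnclosingBall [ProperSpace X] {S : Finset X} (hS : S.Nonempty) :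
    ∃ c ρ, IsMinEnclosingBall (S : Set X) c ρ := by
  obtain ⟨s₀, hs₀⟩ := hS
  have : Nonempty X := ⟨s₀⟩
  let f : X → ℝ := fun x => S.sup' ⟨s₀, hs₀⟩ (dist · x)
  have hf : Continuous f :=
    Continuous.finset_sup'_apply _ fun s _ => continuous_const.dist continuous_id
  have hf_top : Tendsto f (cocompact X) atTop :=
    tendsto_atTop_mono (fun x => S.le_sup' (dist · x) hs₀) (tendsto_dist_left_cocompact_atTop s₀)
  obtain ⟨c, hc⟩ := hf.exists_forall_le hf_top
  refine ⟨c, f c, fun s hs => mem_closedBall.2 (S.le_sup' (dist · c) hs), fun c' ρ' h => ?_⟩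
  exact (hc c').trans (S.sup'_le _ _ fun s hs => mem_closedBall.1 (h hs))

end MetricSpace

theorem succ_mul_le_add_three_mul {n : ℕ} {K ρ ρ' : ℝ} (hρ : 0 ≤ ρ) (hρK : ρ ≤ K)
    (hstep : K ^ 2 + ρ ^ 2 < 2 * K * ρ') (hn : n * K ≤ (n + 2) * ρ) :
    (n + 1) * K ≤ (n + 3) * ρ' := by
  have hK : 0 < K := (hρ.trans hρK).lt_of_ne (by rintro rfl; nlinarith)
  have ha : 0 ≤ K - ρ := sub_nonneg.2 hρK
  have ht : 0 ≤ 2 * K - (n + 2) * (K - ρ) := by linarith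
  have hn0 : (0 : ℝ) ≤ n := n.cast_nonneg
  nlinarith [mul_nonneg ha ht, mul_nonneg (mul_nonneg hn0 ha) ht, sq_nonneg (K - ρ),
    mul_lt_mul_of_pos_left hstep (by linarith : (0 : ℝ) < n + 3)]

section InnerProductSpace

variable {E : Type*} [NormedAddCommGroup E] [InnerProductSpace ℝ E]

theorem dist_add_smul_sub_sq (s c x : E) (θ : ℝ) :
    dist s (c + θ • (x - c)) ^ 2 =
      (1 - θ) * dist s c ^ 2 + θ * dist s x ^ 2 - θ * (1 - θ) * dist c x ^ 2 := by
  have h₁ : s - (c + θ • (x - c)) = (s - c) - θ • (x - c) := by abel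
  have h₂ : s - x = (s - c) - (x - c) := by abel
  rw [dist_eq_norm, dist_eq_norm, dist_eq_norm, dist_eq_norm, h₁, h₂, norm_sub_rev c x,
    norm_sub_sq_real (s - c), norm_sub_sq_real (s - c), inner_smul_right, norm_smul,
    Real.norm_eq_abs, mul_pow, sq_abs]
  ring

namespace IsMinEnclosingBall

variable {S : Finset E} {c : E} {ρ : ℝ}

theorem exists_sq_add_dist_sq_le (h : IsMinEnclosingBall (S : Set E) c ρ) (x : E) :
    ∃ s ∈ S, ρ ^ 2 + dist c x ^ 2 ≤ dist s x ^ 2 := by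
  by_contra! hfar
  have hclose : ∀ᶠ θ in 𝓝[>] (0 : ℝ), ∀ s ∈ S, dist s (c + θ • (x - c)) < ρ := by
    refine (eventually_all_finset S).2 fun s hs => ?_
    have hlim : ∀ᶠ θ in 𝓝[>] (0 : ℝ),
        dist s x ^ 2 + θ * dist c x ^ 2 < ρ ^ 2 + dist c x ^ 2 :=
      ((Continuous.tendsto' (by fun_prop) 0 _ (by simp)).mono_left
        nhdsWithin_le_nhds).eventually_lt_const (hfar s hs)
    filter_upwards [hlim, self_mem_nhdsWithin, Ioo_mem_nhdsGT one_pos] with θ hθ hθ₀ hθ₁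
    have hsc : dist s c ^ 2 ≤ ρ ^ 2 :=
      pow_le_pow_left₀ dist_nonneg (mem_closedBall.1 (h.1 (Finset.mem_coe.2 hs))) 2
    refine lt_of_pow_lt_pow_left₀ 2 h.radius_nonneg ?_
    rw [dist_add_smul_sub_sq]
    nlinarith [mul_le_mul_of_nonneg_left hsc (sub_nonneg.2 hθ₁.2.le),
      mul_lt_mul_of_pos_left hθ hθ₀.out]
  obtain ⟨θ, hθ⟩ := hclose.exists
  obtain ⟨s, hs, hle⟩ := h.exists_radius_le_dist (c + θ • (x - c))
  exact (hθ s hs).not_ge hle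

theorem sq_add_dist_sq_le {T : Set E} {c' : E} {ρ' : ℝ}
    (h : IsMinEnclosingBall (S : Set E) c ρ) (h' : IsMinEnclosingBall T c' ρ')
    (hST : (S : Set E) ⊆ T) : ρ ^ 2 + dist c c' ^ 2 ≤ ρ' ^ 2 := by
  obtain ⟨s, hs, hle⟩ := h.exists_sq_add_dist_sq_le c'
  exact hle.trans (pow_le_pow_left₀ dist_nonneg (mem_closedBall.1 (h'.1 (hST hs))) 2)

theorem sq_add_sq_lt_two_mul {T : Set E} {c' p : E} {ρ' K : ℝ}
    (h : IsMinEnclosingBall (S : Set E) c ρ) (h' : IsMinEnclosingBall T c' ρ')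
    (hST : (S : Set E) ⊆ T) (hpT : p ∈ T) (hp : K < dist p c) (hρ'K : ρ' ≤ K) :
    K ^ 2 + ρ ^ 2 < 2 * K * ρ' := by
  have hsq := h.sq_add_dist_sq_le h' hST
  have hpc' : dist p c' ≤ ρ' := mem_closedBall.1 (h'.1 hpT)
  have hgap : K - ρ' < dist c c' := by linarith [dist_triangle p c' c, dist_comm c c']
  nlinarith [mul_self_lt_mul_self (sub_nonneg.2 hρ'K) hgap]

end IsMinEnclosingBall

variable [ProperSpace E]

theorem IsMinEnclosingBall.exists_insert_of_not_subset [DecidableEq E] {P S : Finset E}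
    {c₀ c : E} {r K ρ : ℝ} {n : ℕ} (hPr : (P : Set E) ⊆ closedBall c₀ r) (hrK : r < K)
    (hSP : S ⊆ P) (h : IsMinEnclosingBall (S : Set E) c ρ) (hρ : n * K ≤ (n + 2) * ρ)
    (hcov : ¬ (P : Set E) ⊆ closedBall c K) :
    ∃ p ∈ P, ∃ c' ρ', IsMinEnclosingBall ((insert p S : Finset E) : Set E) c' ρ' ∧ ρ' ≤ r ∧
      (n + 1) * K ≤ (n + 3) * ρ' := by
  obtain ⟨p, hpP, hp⟩ : ∃ p ∈ P, K < dist p c := by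
    simpa [Set.subset_def] using hcov
  obtain ⟨c', ρ', h'⟩ := exists_isMinEnclosingBall (S.insert_nonempty p)
  have hSr : (S : Set E) ⊆ closedBall c₀ r := (Finset.coe_subset.2 hSP).trans hPr
  have hρ'r : ρ' ≤ r :=
    h'.2 c₀ r (by rw [Finset.coe_insert]; exact Set.insert_subset (hPr hpP) hSr)
  have hstep := h.sq_add_sq_lt_two_mul h' (by simp) (by simp) hp (hρ'r.trans hrK.le)
  exact ⟨p, hpP, c', ρ', h', hρ'r,
    succ_mul_le_add_three_mul h.radius_nonneg ((h.2 c₀ r hSr).trans hrK.le) hstep hρ⟩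

theorem exists_isMinEnclosingBall_subset_or {P : Finset E} (hP : P.Nonempty) {c₀ : E} {r K : ℝ}
    (hPr : (P : Set E) ⊆ closedBall c₀ r) (hrK : r < K) (n : ℕ) :
    ∃ S ⊆ P, S.card ≤ n + 1 ∧ ∃ c ρ, IsMinEnclosingBall (S : Set E) c ρ ∧
      ((P : Set E) ⊆ closedBall c K ∨ n * K ≤ (n + 2) * ρ) := by
  induction n with
  | zero =>
    obtain ⟨p, hp⟩ := hP
    obtain ⟨c, ρ, h⟩ := exists_isMinEnclosingBall (Finset.singleton_nonempty p)
    exact ⟨{p}, by simpa using hp, by simp, c, ρ, h, Or.inr (by simpa using h.radius_nonneg)⟩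
  | succ n ih =>
    classical
    obtain ⟨S, hSP, hcard, c, ρ, h, hcov_or_hρ⟩ := ih
    by_cases hcov : (P : Set E) ⊆ closedBall c K
    · exact ⟨S, hSP, by omega, c, ρ, h, Or.inl hcov⟩
    obtain ⟨p, hp, c', ρ', h', -, hρ'⟩ :=
      h.exists_insert_of_not_subset hPr hrK hSP (hcov_or_hρ.resolve_left hcov) hcov
    refine ⟨insert p S, Finset.insert_subset hp hSP, (S.card_insert_le p).trans (by omega),
      c', ρ', h', Or.inr ?_⟩
    push_cast
    linarith

theorem exists_coreset {P : Finset E} (hP : P.Nonempty) {c₀ : E} {r ε : ℝ}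
    (hPr : (P : Set E) ⊆ closedBall c₀ r) (hr : 0 < r) (hε : 0 < ε) :
    ∃ S ⊆ P, S.card ≤ ⌈2 / ε⌉₊ + 1 ∧ ∃ c ρ, IsMinEnclosingBall (S : Set E) c ρ ∧
      (P : Set E) ⊆ closedBall c ((1 + ε) * r) := by
  classical
  have hrK : r < (1 + ε) * r := by nlinarith
  obtain ⟨S, hSP, hcard, c, ρ, h, hcov | hρ⟩ :=
    exists_isMinEnclosingBall_subset_or hP hPr hrK ⌈2 / ε⌉₊
  · exact ⟨S, hSP, hcard, c, ρ, h, hcov⟩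
  refine ⟨S, hSP, hcard, c, ρ, h, ?_⟩
  by_contra hcov
  obtain ⟨_, -, _, ρ', -, hρ'r, hρ'⟩ := h.exists_insert_of_not_subset hPr hrK hSP hρ hcov
  have hN : 2 ≤ ⌈2 / ε⌉₊ * ε := (div_le_iff₀ hε).1 (Nat.le_ceil _)
  -- `(N + 1) (1 + ε) r ≤ (N + 3) ρ' ≤ (N + 3) r` contradicts `N ε ≥ 2`
  nlinarith [mul_pos hr hε]

end InnerProductSpace

theorem nukc_coresets_cover_general (d : ℕ) (ε : ℝ) (hε0 : 0 < ε)
    (k : ℕ) (C : Finset (EuclideanSpace ℝ (Fin d)))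
    (c : Fin k → EuclideanSpace ℝ (Fin d)) (r : Fin k → ℝ) (hr : ∀ i, 0 < r i)
    (hcover : ∀ p ∈ C, ∃ i : Fin k, p ∈ Metric.closedBall (c i) (r i)) :
    ∃ (S : Fin k → Finset (EuclideanSpace ℝ (Fin d)))
      (c' : Fin k → EuclideanSpace ℝ (Fin d)),
      (∀ i : Fin k,
        (↑(S i) ⊆ (↑C : Set (EuclideanSpace ℝ (Fin d))) ∩ Metric.closedBall (c i) (r i)) ∧
        (S i).card ≤ ⌈(2 : ℝ) / ε⌉₊ + 1 ∧
        ((S i).Nonempty → ∃ ρ : ℝ,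
          ↑(S i) ⊆ Metric.closedBall (c' i) ρ ∧
          ∀ (c'' : EuclideanSpace ℝ (Fin d)) (ρ' : ℝ),
            ↑(S i) ⊆ Metric.closedBall c'' ρ' → ρ ≤ ρ')) ∧
      ∀ p ∈ C, ∃ i : Fin k, (S i).Nonempty ∧
        p ∈ Metric.closedBall (c' i) ((1 + ε) * r i) := by
  classical
  have cluster (i : Fin k) :
      ∃ (S : Finset (EuclideanSpace ℝ (Fin d))) (c' : EuclideanSpace ℝ (Fin d)),
      (S : Set _) ⊆ C ∩ closedBall (c i) (r i) ∧ S.card ≤ ⌈(2 : ℝ) / ε⌉₊ + 1 ∧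
      (S.Nonempty → ∃ ρ, IsMinEnclosingBall (S : Set _) c' ρ) ∧
      ∀ p ∈ C, p ∈ closedBall (c i) (r i) → S.Nonempty ∧ p ∈ closedBall c' ((1 + ε) * r i) := by
    let P := C.filter (· ∈ closedBall (c i) (r i))
    have hPC : (P : Set (EuclideanSpace ℝ (Fin d))) = ↑C ∩ closedBall (c i) (r i) :=
      Finset.coe_filter _ _
    rcases P.eq_empty_or_nonempty with hP | hP
    · refine ⟨∅, c i, by simp, by simp, by simp, fun p hp hpi => ?_⟩
      exact (Finset.eq_empty_iff_forall_notMem.1 hP p (Finset.mem_filter.2 ⟨hp, hpi⟩)).elim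
    obtain ⟨S, hSP, hcard, c', ρ, h, hPc'⟩ :=
      exists_coreset hP (hPC ▸ Set.inter_subset_right) (hr i) hε0
    refine ⟨S, c', hPC ▸ Finset.coe_subset.2 hSP, hcard, fun _ => ⟨ρ, h⟩,
      fun p hp hpi => ⟨Finset.coe_nonempty.1 h.nonempty, hPc' ?_⟩⟩
    exact hPC ▸ ⟨hp, hpi⟩
  choose S c' hSC hcard hmeb hcov using cluster
  refine ⟨S, c', fun i => ⟨hSC i, hcard i, hmeb i⟩, fun p hp => ?_⟩
  obtain ⟨i, hi⟩ := hcover p hp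
  exact ⟨i, hcov i p hp hi⟩

/-- Correctness content of the (1+ε)-approximation for Euclidean NUkC:
from each optimal cluster one can extract a core-set of size at most `⌈2/ε⌉ + 1`
whose MEB centers, with radii blown up by `(1+ε)`, together cover all clients. -/
theorem nukc_coresets_cover (d : ℕ) (hd : 1 ≤ d) (ε : ℝ) (hε0 : 0 < ε) (hε1 : ε ≤ 1)
    (k : ℕ) (hk : 1 ≤ k) (C : Finset (EuclideanSpace ℝ (Fin d)))
    (c : Fin k → EuclideanSpace ℝ (Fin d)) (r : Fin k → ℝ) (hr : ∀ i, 0 < r i)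
    (hcover : ∀ p ∈ C, ∃ i : Fin k, p ∈ Metric.closedBall (c i) (r i)) :
    ∃ (S : Fin k → Finset (EuclideanSpace ℝ (Fin d)))
      (c' : Fin k → EuclideanSpace ℝ (Fin d)),
      (∀ i : Fin k,
        (↑(S i) ⊆ (↑C : Set (EuclideanSpace ℝ (Fin d))) ∩ Metric.closedBall (c i) (r i)) ∧
        (S i).card ≤ ⌈(2 : ℝ) / ε⌉₊ + 1 ∧
        ((S i).Nonempty → ∃ ρ : ℝ,
          ↑(S i) ⊆ Metric.closedBall (c' i) ρ ∧
          ∀ (c'' : EuclideanSpace ℝ (Fin d)) (ρ' : ℝ),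
            ↑(S i) ⊆ Metric.closedBall c'' ρ' → ρ ≤ ρ')) ∧
      ∀ p ∈ C, ∃ i : Fin k, (S i).Nonempty ∧
        p ∈ Metric.closedBall (c' i) ((1 + ε) * r i) :=
  nukc_coresets_cover_general d ε hε0 k C c r hr hcover
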